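/- Let T1 : 𝕋 → Matrix q₁ p₁ ℂ and T2 : 𝕋 → Matrix q₁ p₂ ℂ be continuous. Suppose: U_i : 𝕋 → Matrix q₁ p₂ ℂ is continuous, inner, and in H∞; U_o : 𝕋 → Matrix p₂ p₂ ℂ is continuous, belongs to H∞, is pointwise invertible with z ↦ U_o(z)⁻¹ in H∞, and T2(z) = U_i(z)U_o(z) for all z ∈ 𝕋. Define Y := (I − U_iU_i^∼)T1. Suppose for every real γ > ‖Y‖∞ we are given a continuous Y_{o,γ} : 𝕋 → Matrix p₁ p₁ ℂ, pointwise invertible, with Y_{o,γ} ∈ H∞, (Y_{o,γ})⁻¹ ∈ H∞, and Y_{o,γ}(z)ᴴY_{o,γ}(z) = γ²·I − Y(z)ᴴY(z) for all z ∈ 𝕋; define R_γ := U_i^∼·T1·Y_{o,γ}⁻¹. Then inf{‖T1 − T2·Q‖∞ : Q : 𝕋 → Matrix p₂ p₁ ℂ continuous, Q ∈ H∞} = inf{γ : γ > ‖Y‖∞ and dist(R_γ, H∞) < 1}. -/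

import Mathlib

open Matrix

/-- The spectral norm (ℓ²→ℓ² operator norm, largest singular value) of a complex matrix. -/
noncomputable def specNorm {m n : Type*} [Fintype m] [Fintype n] [DecidableEq n]
    (M : Matrix m n ℂ) : ℝ :=
  ‖LinearMap.toContinuousLinearMap (Matrix.toEuclideanLin M)‖

/-- The `H∞` norm of a matrix-valued function on the unit circle:
`‖F‖∞ = sup_{z ∈ 𝕋} ‖F(z)‖`. -/
noncomputable def hinfNorm {m n : Type*} [Fintype m] [Fintype n] [DecidableEq n]
    (F : Circle → Matrix m n ℂ) : ℝ :=
  ⨆ z : Circle, specNorm (F z)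

/-- A matrix-valued function `F` on the unit circle belongs to `H∞` if there is a
matrix-valued function `G`, continuous on the closed unit disc and analytic on the open
unit disc, with `F(z) = G(z⁻¹)` for all `z` on the circle. -/
def MemHInf {m n : Type*} (F : Circle → Matrix m n ℂ) : Prop :=
  ∃ G : ℂ → Matrix m n ℂ,
    (∀ i j, ContinuousOn (fun w => G w i j) (Metric.closedBall (0 : ℂ) 1)) ∧
    (∀ i j, AnalyticOn ℂ (fun w => G w i j) (Metric.ball (0 : ℂ) 1)) ∧
    (∀ z : Circle, F z = G ((z : ℂ)⁻¹))

/-- The distance from `R` to `H∞` in the `‖·‖∞` norm: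
`dist(R, H∞) = inf { ‖R − X‖∞ : X continuous, X ∈ H∞ }`. -/
noncomputable def distHInf {m n : Type*} [Fintype m] [Fintype n] [DecidableEq n]
    (R : Circle → Matrix m n ℂ) : ℝ :=
  sInf {c : ℝ | ∃ X : Circle → Matrix m n ℂ,
    Continuous X ∧ MemHInf X ∧ c = hinfNorm fun z => R z - X z}

/-!
Write `A_Q = T1 − T2 Q` and `Y = (I − Ui Uiᴴ) T1`. Since `Ui` is an isometry, `I − Ui Uiᴴ` and
`Ui Uiᴴ` are complementary orthogonal projections, so pointwise on the circle
`‖A_Q v‖² = ‖(Uiᴴ T1 − Uo Q) v‖² + ‖Y v‖²`, while the spectral factor satisfies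
`‖Yo v‖² = γ² ‖v‖² − ‖Y v‖²`. Hence `‖A_Q‖∞ ≤ γ` exactly when `‖(Uiᴴ T1 − Uo Q) v‖ ≤ ‖Yo v‖`
for all `v`, i.e. when `‖R_γ − X‖∞ ≤ 1` for `X = Uo Q Yo⁻¹`. The substitution `Q ↔ X` is a
bijection of `H∞` because `Uo`, `Yo` are units of `H∞`. If `‖A_Q‖∞ = c < γ`, the same identities
give the strict bound `‖R_γ − X‖∞ ≤ c / γ < 1`, so the two infima agree.
-/

theorem csInf_eq_csInf_of_forall_exists_le_of_forall_lt_mem {α : Type*}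
    [ConditionallyCompleteLinearOrder α] [DenselyOrdered α] [NoMaxOrder α] {S T : Set α}
    (hS : S.Nonempty) (hSb : BddBelow S) (hTb : BddBelow T)
    (hTS : ∀ t ∈ T, ∃ s ∈ S, s ≤ t) (hST : ∀ s ∈ S, ∀ t, s < t → t ∈ T) :
    sInf S = sInf T := by
  obtain ⟨s, hs⟩ := hS
  obtain ⟨t, hst⟩ := exists_gt s
  refine le_antisymm (le_csInf ⟨t, hST s hs t hst⟩ fun t ht => ?_)
    (le_csInf ⟨s, hs⟩ fun s hs => le_of_forall_gt_imp_ge_of_dense fun t hst =>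
      csInf_le hTb (hST s hs t hst))
  obtain ⟨s, hs, hst⟩ := hTS t ht
  exact (csInf_le hSb hs).trans hst

theorem Continuous.matrix_inv_of_isUnit {X R n : Type*} [TopologicalSpace X] [Field R]
    [TopologicalSpace R] [IsTopologicalRing R] [ContinuousInv₀ R] [Fintype n] [DecidableEq n]
    {A : X → Matrix n n R} (hA : Continuous A) (h : ∀ x, IsUnit (A x)) :
    Continuous fun x => (A x)⁻¹ := by
  have hdet : ∀ x, (A x).det ≠ 0 := fun x => ((isUnit_iff_isUnit_det _).mp (h x)).ne_zero
  simp only [inv_def, Ring.inverse_eq_inv']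
  exact (hA.matrix_det.inv₀ hdet).smul hA.matrix_adjugate

section SpectralNorm

variable {l m n p : Type*} [Fintype n] [DecidableEq n]

theorem toEuclideanLin_mul_apply [Fintype p] [DecidableEq p] (A : Matrix m n ℂ)
    (B : Matrix n p ℂ) (v : EuclideanSpace ℂ p) :
    toEuclideanLin (A * B) v = toEuclideanLin A (toEuclideanLin B v) := by
  simp

theorem toEuclideanLin_one_apply (v : EuclideanSpace ℂ n) :
    toEuclideanLin (1 : Matrix n n ℂ) v = v := by
  simp

variable [Fintype m]

theorem specNorm_nonneg (M : Matrix m n ℂ) : 0 ≤ specNorm M := norm_nonneg _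

theorem continuous_specNorm : Continuous (specNorm : Matrix m n ℂ → ℝ) := by
  have : Continuous fun M : Matrix m n ℂ =>
      (toEuclideanLin.trans LinearMap.toContinuousLinearMap).toLinearMap M :=
    LinearMap.continuous_of_finiteDimensional _
  exact continuous_norm.comp this

theorem norm_toEuclideanLin_apply_le (M : Matrix m n ℂ) (v : EuclideanSpace ℂ n) :
    ‖toEuclideanLin M v‖ ≤ specNorm M * ‖v‖ :=
  (LinearMap.toContinuousLinearMap (toEuclideanLin M)).le_opNorm v

theorem sq_norm_toEuclideanLin_apply_le (M : Matrix m n ℂ) (v : EuclideanSpace ℂ n) :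
    ‖toEuclideanLin M v‖ ^ 2 ≤ specNorm M ^ 2 * ‖v‖ ^ 2 := by
  rw [← mul_pow]
  exact pow_le_pow_left₀ (norm_nonneg _) (norm_toEuclideanLin_apply_le M v) 2

theorem specNorm_le_of_forall_sq_le {M : Matrix m n ℂ} {a : ℝ} (ha : 0 ≤ a)
    (h : ∀ v, ‖toEuclideanLin M v‖ ^ 2 ≤ a ^ 2 * ‖v‖ ^ 2) : specNorm M ≤ a :=
  ContinuousLinearMap.opNorm_le_bound _ ha fun v =>
    (pow_le_pow_iff_left₀ (norm_nonneg _) (by positivity) two_ne_zero).mp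
      (by rw [mul_pow]; exact h v)

theorem specNorm_mul_inv_le {M : Matrix m n ℂ} {W : Matrix n n ℂ} (hW : IsUnit W) {a : ℝ}
    (ha : 0 ≤ a) (h : ∀ v, ‖toEuclideanLin M v‖ ^ 2 ≤ a ^ 2 * ‖toEuclideanLin W v‖ ^ 2) :
    specNorm (M * W⁻¹) ≤ a := by
  refine specNorm_le_of_forall_sq_le ha fun w => ?_
  have hw : toEuclideanLin W (toEuclideanLin W⁻¹ w) = w := by
    rw [← toEuclideanLin_mul_apply, mul_nonsing_inv _ ((isUnit_iff_isUnit_det _).mp hW),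
      toEuclideanLin_one_apply]
  simpa only [toEuclideanLin_mul_apply, hw] using h (toEuclideanLin W⁻¹ w)

theorem sq_norm_toEuclideanLin_apply [DecidableEq m] (A : Matrix m n ℂ)
    (v : EuclideanSpace ℂ n) :
    ‖toEuclideanLin A v‖ ^ 2 = RCLike.re (inner ℂ v (toEuclideanLin (Aᴴ * A) v)) := by
  rw [toEuclideanLin_mul_apply, toEuclideanLin_conjTranspose_eq_adjoint,
    LinearMap.adjoint_inner_right, inner_self_eq_norm_sq]

theorem sq_norm_toEuclideanLin_apply_eq_add [DecidableEq m] [Fintype l] [DecidableEq l]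
    [Fintype p] [DecidableEq p] {A : Matrix m n ℂ} {M : Matrix p n ℂ} {N : Matrix l n ℂ}
    (h : Aᴴ * A = Mᴴ * M + Nᴴ * N) (v : EuclideanSpace ℂ n) :
    ‖toEuclideanLin A v‖ ^ 2 = ‖toEuclideanLin M v‖ ^ 2 + ‖toEuclideanLin N v‖ ^ 2 := by
  rw [sq_norm_toEuclideanLin_apply, sq_norm_toEuclideanLin_apply, sq_norm_toEuclideanLin_apply, h,
    map_add, LinearMap.add_apply, inner_add_right, map_add]

theorem sq_norm_toEuclideanLin_apply_add_eq [DecidableEq m] {W : Matrix n n ℂ}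
    {N : Matrix m n ℂ} {γ : ℝ}
    (h : Wᴴ * W = ((γ : ℂ) ^ 2) • (1 : Matrix n n ℂ) - Nᴴ * N) (v : EuclideanSpace ℂ n) :
    ‖toEuclideanLin W v‖ ^ 2 + ‖toEuclideanLin N v‖ ^ 2 = γ ^ 2 * ‖v‖ ^ 2 := by
  rw [eq_sub_iff_add_eq] at h
  rw [sq_norm_toEuclideanLin_apply, sq_norm_toEuclideanLin_apply, ← map_add, ← inner_add_right,
    ← LinearMap.add_apply, ← map_add, h, map_smul, LinearMap.smul_apply, toEuclideanLin_one_apply,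
    inner_smul_right, ← Complex.ofReal_pow]
  exact (Complex.re_ofReal_mul _ _).trans (congrArg _ (inner_self_eq_norm_sq (𝕜 := ℂ) v))

end SpectralNorm

section Isometry

variable {m n p : Type*} [Fintype m] [Fintype n] [Fintype p] [DecidableEq m] [DecidableEq n]
  [DecidableEq p] {U : Matrix m p ℂ}

omit [Fintype n] [DecidableEq n] in
theorem conjTranspose_mul_self_sub_mul_of_isometry (hU : Uᴴ * U = 1) (T : Matrix m n ℂ)
    (B : Matrix p n ℂ) :
    (T - U * B)ᴴ * (T - U * B)
      = (Uᴴ * T - B)ᴴ * (Uᴴ * T - B) + ((1 - U * Uᴴ) * T)ᴴ * ((1 - U * Uᴴ) * T) := by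
  have hUB : Uᴴ * (U * B) = B := by rw [← Matrix.mul_assoc, hU, Matrix.one_mul]
  have hUUT : Uᴴ * (U * (Uᴴ * T)) = Uᴴ * T := by rw [← Matrix.mul_assoc, hU, Matrix.one_mul]
  simp only [conjTranspose_sub, conjTranspose_mul, conjTranspose_conjTranspose, Matrix.sub_mul,
    Matrix.mul_sub, Matrix.one_mul, Matrix.mul_assoc]
  rw [hUB, hUUT]
  abel

theorem sq_norm_toEuclideanLin_sub_mul_apply_of_isometry (hU : Uᴴ * U = 1) (T : Matrix m n ℂ)
    (B : Matrix p n ℂ) (v : EuclideanSpace ℂ n) :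
    ‖toEuclideanLin (T - U * B) v‖ ^ 2
      = ‖toEuclideanLin (Uᴴ * T - B) v‖ ^ 2 + ‖toEuclideanLin ((1 - U * Uᴴ) * T) v‖ ^ 2 :=
  sq_norm_toEuclideanLin_apply_eq_add (conjTranspose_mul_self_sub_mul_of_isometry hU T B) v

theorem specNorm_mul_le_of_isometry (hU : Uᴴ * U = 1) (T : Matrix m n ℂ) (B : Matrix p n ℂ) :
    specNorm ((1 - U * Uᴴ) * T) ≤ specNorm (T - U * B) :=
  specNorm_le_of_forall_sq_le (specNorm_nonneg _) fun v => by
    nlinarith [sq_norm_toEuclideanLin_sub_mul_apply_of_isometry hU T B v,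
      sq_norm_toEuclideanLin_apply_le (T - U * B) v]

variable {T : Matrix m n ℂ} {W : Matrix n n ℂ} {γ : ℝ}
  (hW : Wᴴ * W = ((γ : ℂ) ^ 2) • (1 : Matrix n n ℂ) - ((1 - U * Uᴴ) * T)ᴴ * ((1 - U * Uᴴ) * T))
include hW

theorem specNorm_sub_mul_le_of_isometry (hU : Uᴴ * U = 1) (hγ : 0 ≤ γ) {B E : Matrix p n ℂ}
    (hE : specNorm E ≤ 1) (hB : Uᴴ * T - B = E * W) : specNorm (T - U * B) ≤ γ := by
  refine specNorm_le_of_forall_sq_le hγ fun v => ?_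
  have hEW : ‖toEuclideanLin (Uᴴ * T - B) v‖ ^ 2 ≤ ‖toEuclideanLin W v‖ ^ 2 := by
    rw [hB, toEuclideanLin_mul_apply]
    nlinarith [sq_norm_toEuclideanLin_apply_le E (toEuclideanLin W v),
      pow_le_one₀ (specNorm_nonneg E) hE (n := 2), sq_nonneg ‖toEuclideanLin W v‖]
  nlinarith [sq_norm_toEuclideanLin_sub_mul_apply_of_isometry hU T B v,
    sq_norm_toEuclideanLin_apply_add_eq hW v]

theorem specNorm_sub_mul_mul_inv_le_of_isometry (hU : Uᴴ * U = 1) (hWu : IsUnit W) (hγ : 0 < γ)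
    {B : Matrix p n ℂ} {c : ℝ} (hc : specNorm (T - U * B) ≤ c) (hcγ : c ≤ γ) :
    specNorm ((Uᴴ * T - B) * W⁻¹) ≤ c / γ := by
  have hc0 : 0 ≤ c := (specNorm_nonneg _).trans hc
  refine specNorm_mul_inv_le hWu (by positivity) fun v => ?_
  have hA := sq_norm_toEuclideanLin_apply_le (T - U * B) v
  have hc2 : specNorm (T - U * B) ^ 2 ≤ c ^ 2 := pow_le_pow_left₀ (specNorm_nonneg _) hc 2
  rw [div_pow, div_mul_eq_mul_div, le_div_iff₀ (by positivity)]
  -- with `Y = (1 - U Uᴴ) T`: `γ² ‖(Uᴴ T - B) v‖² ≤ γ² (c² ‖v‖² - ‖Y v‖²)`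
  -- `≤ c² (γ² ‖v‖² - ‖Y v‖²) = c² ‖W v‖²`, the middle step because `c ≤ γ`
  nlinarith [sq_norm_toEuclideanLin_sub_mul_apply_of_isometry hU T B v,
    sq_norm_toEuclideanLin_apply_add_eq hW v, mul_le_mul_of_nonneg_right hc2 (sq_nonneg ‖v‖),
    mul_le_mul_of_nonneg_right (pow_le_pow_left₀ hc0 hcγ 2)
      (sq_nonneg ‖toEuclideanLin ((1 - U * Uᴴ) * T) v‖)]

end Isometry

section CircleFunctions

variable {m n p : Type*} [Fintype m] [Fintype n] [DecidableEq n]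

theorem hinfNorm_nonneg (F : Circle → Matrix m n ℂ) : 0 ≤ hinfNorm F :=
  Real.iSup_nonneg fun z => specNorm_nonneg (F z)

theorem specNorm_le_hinfNorm {F : Circle → Matrix m n ℂ} (hF : Continuous F) (z : Circle) :
    specNorm (F z) ≤ hinfNorm F :=
  le_ciSup (isCompact_range (continuous_specNorm.comp hF)).bddAbove z

theorem hinfNorm_le {F : Circle → Matrix m n ℂ} {a : ℝ} (h : ∀ z, specNorm (F z) ≤ a) :
    hinfNorm F ≤ a :=
  ciSup_le h

omit [Fintype m] [Fintype n] [DecidableEq n] in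
theorem memHInf_zero : MemHInf fun _ : Circle => (0 : Matrix m n ℂ) :=
  ⟨fun _ => 0, fun _ _ => continuousOn_const, fun _ _ => analyticOn_const, fun _ => rfl⟩

omit [Fintype m] [DecidableEq n] in
theorem MemHInf.mul {F : Circle → Matrix m n ℂ} {G : Circle → Matrix n p ℂ} (hF : MemHInf F)
    (hG : MemHInf G) : MemHInf fun z => F z * G z := by
  obtain ⟨F', hcF, haF, hF⟩ := hF
  obtain ⟨G', hcG, haG, hG⟩ := hG
  refine ⟨fun w => F' w * G' w, fun i j => ?_, fun i j => ?_,
    fun z => congrArg₂ (· * ·) (hF z) (hG z)⟩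
  · simp only [mul_apply]
    exact continuousOn_finsetSum _ fun k _ => (hcF i k).mul (hcG k j)
  · simp only [mul_apply]
    exact Finset.analyticOn_fun_sum _ fun k _ => (haF i k).mul (haG k j)

theorem distHInf_le {R X : Circle → Matrix m n ℂ} (hX : Continuous X) (hXH : MemHInf X) :
    distHInf R ≤ hinfNorm fun z => R z - X z :=
  csInf_le ⟨0, by rintro _ ⟨X, -, -, rfl⟩; exact hinfNorm_nonneg _⟩ ⟨X, hX, hXH, rfl⟩

theorem exists_hinfNorm_sub_lt_of_distHInf_lt {R : Circle → Matrix m n ℂ} {a : ℝ}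
    (h : distHInf R < a) :
    ∃ X : Circle → Matrix m n ℂ, Continuous X ∧ MemHInf X ∧ hinfNorm (fun z => R z - X z) < a := by
  rw [distHInf] at h
  obtain ⟨_, ⟨X, hX, hXH, rfl⟩, hlt⟩ :=
    exists_lt_of_csInf_lt (by exact ⟨_, 0, continuous_const, memHInf_zero, rfl⟩) h
  exact ⟨X, hX, hXH, hlt⟩

end CircleFunctions

section HInfOptimization

variable {m n p : Type*} [Fintype m] [Fintype n] [Fintype p] [DecidableEq m] [DecidableEq n]
  [DecidableEq p] {T : Circle → Matrix m n ℂ} {U : Circle → Matrix m p ℂ}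
  {Uo : Circle → Matrix p p ℂ} {Yo : Circle → Matrix n n ℂ} {γ : ℝ}

theorem hinfNorm_mul_le_hinfNorm_sub_mul_of_isometry (hT : Continuous T) (hUc : Continuous U)
    (hU : ∀ z, (U z)ᴴ * U z = 1) (hUoc : Continuous Uo) {Q : Circle → Matrix p n ℂ}
    (hQc : Continuous Q) :
    hinfNorm (fun z => (1 - U z * (U z)ᴴ) * T z)
      ≤ hinfNorm fun z => T z - U z * Uo z * Q z :=
  hinfNorm_le fun z => (specNorm_mul_le_of_isometry (hU z) (T z) (Uo z * Q z)).trans <| by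
    rw [← Matrix.mul_assoc]
    exact specNorm_le_hinfNorm (hT.sub ((hUc.matrix_mul hUoc).matrix_mul hQc)) z

variable (hYo : ∀ z, (Yo z)ᴴ * Yo z = ((γ : ℂ) ^ 2) • (1 : Matrix n n ℂ)
    - ((1 - U z * (U z)ᴴ) * T z)ᴴ * ((1 - U z * (U z)ᴴ) * T z))
include hYo

theorem exists_hinfNorm_sub_mul_le_of_distHInf_lt_one (hT : Continuous T) (hUc : Continuous U)
    (hU : ∀ z, (U z)ᴴ * U z = 1) (hUoc : Continuous Uo) (hUoUnit : ∀ z, IsUnit (Uo z))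
    (hUoInvH : MemHInf fun z => (Uo z)⁻¹) (hYoc : Continuous Yo) (hYoUnit : ∀ z, IsUnit (Yo z))
    (hYoH : MemHInf Yo) (hγ : 0 ≤ γ)
    (hdist : distHInf (fun z => (U z)ᴴ * T z * (Yo z)⁻¹) < 1) :
    ∃ Q : Circle → Matrix p n ℂ, Continuous Q ∧ MemHInf Q ∧
      hinfNorm (fun z => T z - U z * Uo z * Q z) ≤ γ := by
  have hRc : Continuous fun z => (U z)ᴴ * T z * (Yo z)⁻¹ :=
    (hUc.matrix_conjTranspose.matrix_mul hT).matrix_mul (hYoc.matrix_inv_of_isUnit hYoUnit)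
  obtain ⟨X, hXc, hXH, hX⟩ := exists_hinfNorm_sub_lt_of_distHInf_lt hdist
  refine ⟨fun z => (Uo z)⁻¹ * (X z * Yo z),
    (hUoc.matrix_inv_of_isUnit hUoUnit).matrix_mul (hXc.matrix_mul hYoc),
    hUoInvH.mul (hXH.mul hYoH), hinfNorm_le fun z => ?_⟩
  have hdetUo := (isUnit_iff_isUnit_det _).mp (hUoUnit z)
  have hdetYo := (isUnit_iff_isUnit_det _).mp (hYoUnit z)
  rw [Matrix.mul_assoc]
  refine specNorm_sub_mul_le_of_isometry (hYo z) (hU z) hγ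
    ((specNorm_le_hinfNorm (hRc.sub hXc) z).trans hX.le) ?_
  rw [mul_nonsing_inv_cancel_left _ _ hdetUo, Pi.sub_apply, Matrix.sub_mul,
    Matrix.mul_assoc _ (Yo z)⁻¹, nonsing_inv_mul _ hdetYo, Matrix.mul_one]

theorem distHInf_lt_one_of_hinfNorm_sub_mul_lt (hT : Continuous T) (hUc : Continuous U)
    (hU : ∀ z, (U z)ᴴ * U z = 1) (hUoc : Continuous Uo) (hUoH : MemHInf Uo)
    (hYoc : Continuous Yo) (hYoUnit : ∀ z, IsUnit (Yo z)) (hYoInvH : MemHInf fun z => (Yo z)⁻¹)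
    {Q : Circle → Matrix p n ℂ} (hQc : Continuous Q) (hQH : MemHInf Q)
    (hlt : hinfNorm (fun z => T z - U z * Uo z * Q z) < γ) :
    distHInf (fun z => (U z)ᴴ * T z * (Yo z)⁻¹) < 1 := by
  have hYoInvc := hYoc.matrix_inv_of_isUnit hYoUnit
  have hAc : Continuous fun z => T z - U z * Uo z * Q z :=
    hT.sub ((hUc.matrix_mul hUoc).matrix_mul hQc)
  have hγ : 0 < γ := (hinfNorm_nonneg _).trans_lt hlt
  calc distHInf (fun z => (U z)ᴴ * T z * (Yo z)⁻¹)
      ≤ hinfNorm fun z => (U z)ᴴ * T z * (Yo z)⁻¹ - Uo z * Q z * (Yo z)⁻¹ :=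
        distHInf_le ((hUoc.matrix_mul hQc).matrix_mul hYoInvc) ((hUoH.mul hQH).mul hYoInvH)
    _ ≤ hinfNorm (fun z => T z - U z * Uo z * Q z) / γ := hinfNorm_le fun z => by
        rw [← Matrix.sub_mul]
        refine specNorm_sub_mul_mul_inv_le_of_isometry (hYo z) (hU z) (hYoUnit z) hγ ?_ hlt.le
        rw [← Matrix.mul_assoc]
        exact specNorm_le_hinfNorm hAc z
    _ < 1 := (div_lt_one hγ).mpr hlt

end HInfOptimization

theorem hinf_1984_identity_optimal_general (q1 p1 p2 : ℕ)
    (T1 : Circle → Matrix (Fin q1) (Fin p1) ℂ) (hT1 : Continuous T1)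
    (T2 : Circle → Matrix (Fin q1) (Fin p2) ℂ)
    (Ui : Circle → Matrix (Fin q1) (Fin p2) ℂ) (hUic : Continuous Ui)
    (hUiInner : ∀ z, (Ui z)ᴴ * Ui z = 1)
    (Uo : Circle → Matrix (Fin p2) (Fin p2) ℂ) (hUoc : Continuous Uo)
    (hUoH : MemHInf Uo) (hUoUnit : ∀ z, IsUnit (Uo z))
    (hUoInvH : MemHInf fun z => (Uo z)⁻¹)
    (hT2fact : ∀ z, T2 z = Ui z * Uo z)
    (Y : Circle → Matrix (Fin q1) (Fin p1) ℂ)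
    (hY : Y = fun z => (1 - Ui z * (Ui z)ᴴ) * T1 z)
    (Yo : ℝ → Circle → Matrix (Fin p1) (Fin p1) ℂ)
    (hYoc : ∀ γ, hinfNorm Y < γ → Continuous (Yo γ))
    (hYoUnit : ∀ γ, hinfNorm Y < γ → ∀ z, IsUnit (Yo γ z))
    (hYoH : ∀ γ, hinfNorm Y < γ → MemHInf (Yo γ))
    (hYoInvH : ∀ γ, hinfNorm Y < γ → MemHInf fun z => (Yo γ z)⁻¹)
    (hYofact : ∀ γ, hinfNorm Y < γ → ∀ z, (Yo γ z)ᴴ * Yo γ z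
      = ((γ : ℂ) ^ 2) • (1 : Matrix (Fin p1) (Fin p1) ℂ) - (Y z)ᴴ * Y z)
    (R : ℝ → Circle → Matrix (Fin p2) (Fin p1) ℂ)
    (hR : R = fun γ z => (Ui z)ᴴ * T1 z * (Yo γ z)⁻¹) :
    sInf {c : ℝ | ∃ Q : Circle → Matrix (Fin p2) (Fin p1) ℂ,
        Continuous Q ∧ MemHInf Q ∧ c = hinfNorm fun z => T1 z - T2 z * Q z}
      = sInf {γ : ℝ | hinfNorm Y < γ ∧ distHInf (R γ) < 1} := by
  subst hY hR
  obtain rfl : T2 = fun z => Ui z * Uo z := funext hT2fact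
  refine csInf_eq_csInf_of_forall_exists_le_of_forall_lt_mem
    ⟨_, 0, continuous_const, memHInf_zero, rfl⟩
    ⟨0, by rintro _ ⟨Q, -, -, rfl⟩; exact hinfNorm_nonneg _⟩
    ⟨0, fun γ hγ => ((hinfNorm_nonneg _).trans_lt hγ.1).le⟩ ?_ ?_
  · rintro γ ⟨hYγ, hdist⟩
    obtain ⟨Q, hQc, hQH, hQ⟩ := exists_hinfNorm_sub_mul_le_of_distHInf_lt_one (hYofact γ hYγ) hT1
      hUic hUiInner hUoc hUoUnit hUoInvH (hYoc γ hYγ) (hYoUnit γ hYγ) (hYoH γ hYγ)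
      ((hinfNorm_nonneg _).trans hYγ.le) hdist
    exact ⟨_, ⟨Q, hQc, hQH, rfl⟩, hQ⟩
  · rintro _ ⟨Q, hQc, hQH, rfl⟩ γ hγ
    have hYγ :=
      (hinfNorm_mul_le_hinfNorm_sub_mul_of_isometry hT1 hUic hUiInner hUoc hQc).trans_lt hγ
    exact ⟨hYγ, distHInf_lt_one_of_hinfNorm_sub_mul_lt (hYofact γ hYγ) hT1 hUic hUiInner hUoc hUoH
      (hYoc γ hYγ) (hYoUnit γ hYγ) (hYoInvH γ hYγ) hQc hQH hγ⟩

/-- "1984" H∞ control, `T3 = I` case (Theorem 1, part 1):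
`inf { ‖T1 − T2 Q‖∞ : Q ∈ H∞ } = inf { γ : γ > ‖Y‖∞ and dist(R_γ, H∞) < 1 }`. -/
theorem hinf_1984_identity_optimal (q1 p1 p2 : ℕ)
    (T1 : Circle → Matrix (Fin q1) (Fin p1) ℂ) (hT1 : Continuous T1)
    (T2 : Circle → Matrix (Fin q1) (Fin p2) ℂ) (hT2 : Continuous T2)
    (Ui : Circle → Matrix (Fin q1) (Fin p2) ℂ) (hUic : Continuous Ui)
    (hUiInner : ∀ z, (Ui z)ᴴ * Ui z = 1) (hUiH : MemHInf Ui)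
    (Uo : Circle → Matrix (Fin p2) (Fin p2) ℂ) (hUoc : Continuous Uo)
    (hUoH : MemHInf Uo) (hUoUnit : ∀ z, IsUnit (Uo z))
    (hUoInvH : MemHInf fun z => (Uo z)⁻¹)
    (hT2fact : ∀ z, T2 z = Ui z * Uo z)
    (Y : Circle → Matrix (Fin q1) (Fin p1) ℂ)
    (hY : Y = fun z => (1 - Ui z * (Ui z)ᴴ) * T1 z)
    (Yo : ℝ → Circle → Matrix (Fin p1) (Fin p1) ℂ)
    (hYoc : ∀ γ, hinfNorm Y < γ → Continuous (Yo γ))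
    (hYoUnit : ∀ γ, hinfNorm Y < γ → ∀ z, IsUnit (Yo γ z))
    (hYoH : ∀ γ, hinfNorm Y < γ → MemHInf (Yo γ))
    (hYoInvH : ∀ γ, hinfNorm Y < γ → MemHInf fun z => (Yo γ z)⁻¹)
    (hYofact : ∀ γ, hinfNorm Y < γ → ∀ z, (Yo γ z)ᴴ * Yo γ z
      = ((γ : ℂ) ^ 2) • (1 : Matrix (Fin p1) (Fin p1) ℂ) - (Y z)ᴴ * Y z)
    (R : ℝ → Circle → Matrix (Fin p2) (Fin p1) ℂ)
    (hR : R = fun γ z => (Ui z)ᴴ * T1 z * (Yo γ z)⁻¹) :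
    sInf {c : ℝ | ∃ Q : Circle → Matrix (Fin p2) (Fin p1) ℂ,
        Continuous Q ∧ MemHInf Q ∧ c = hinfNorm fun z => T1 z - T2 z * Q z}
      = sInf {γ : ℝ | hinfNorm Y < γ ∧ distHInf (R γ) < 1} :=
  hinf_1984_identity_optimal_general q1 p1 p2 T1 hT1 T2 Ui hUic hUiInner Uo hUoc hUoH hUoUnit
    hUoInvH hT2fact Y hY Yo hYoc hYoUnit hYoH hYoInvH hYofact R hR
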